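/- arXiv:2305.14219 — 2 statements merged into one kernel-verified Lean document; each statement's English description precedes it below -/
import Mathlib

section
/- For every real ν > 0 and all indices i,k ∈ {1,2,3}, each component of the time-dependent Stokeslet velocity satisfies the heat equation away from the singular origin: for every x ∈ ℝ³ with x ≠ 0 and every t > 0, ∂u^S_{ki}/∂t (x,t) = ν·Δ_x u^S_{ki}(x,t); consequently the Stokeslet satisfies the unsteady Stokes equation u^S_{ki,0} + p^S_{k,i} − ν u^S_{ki,jj} = 0 there, since the Stokeslet pressure p^S_k carries a factor δ(x₀ − x₀′) and vanishes for t > 0. -/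
open Real MeasureTheory

noncomputable section

/-- `ℝ³` as a Euclidean space. -/
abbrev E3 := EuclideanSpace ℝ (Fin 3)

/-- The `i`-th standard basis vector of `ℝ³`. -/
def e3 (i : Fin 3) : E3 := EuclideanSpace.single i 1

/-- Partial derivative of `f : ℝ³ → ℝ` in the `i`-th coordinate direction. -/
def pd (i : Fin 3) (f : E3 → ℝ) (x : E3) : ℝ := fderiv ℝ f x (e3 i)

/-- The three-dimensional heat kernel `Φ(x,t) = (4πνt)^(−3/2) exp(−‖x‖²/(4νt))`. -/
def heatKernel (ν : ℝ) (x : E3) (t : ℝ) : ℝ :=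
  (4 * π * ν * t) ^ (-(3 : ℝ) / 2) * Real.exp (-‖x‖ ^ 2 / (4 * ν * t))

/-- The error function `erf y = (2/√π) ∫₀^y exp(−s²) ds`. -/
def erf (y : ℝ) : ℝ := (2 / Real.sqrt π) * ∫ s in (0 : ℝ)..y, Real.exp (-s ^ 2)

/-- The Stokeslet scalar potential `S(x,t) = erf(‖x‖/√(4νt))/‖x‖`. -/
def stokesPot (ν : ℝ) (x : E3) (t : ℝ) : ℝ := erf (‖x‖ / Real.sqrt (4 * ν * t)) / ‖x‖

/-- The time-dependent Stokeslet velocity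
`u^S_{ki}(x,t) = (1/(4πν)) ∂S/∂t δ_{ki} − (1/(4π)) ∂²S/∂x_k∂x_i`. -/
def stokeslet (ν : ℝ) (k i : Fin 3) (x : E3) (t : ℝ) : ℝ :=
  (1 / (4 * π * ν)) * deriv (fun s => stokesPot ν x s) t * (if k = i then 1 else 0)
    - (1 / (4 * π)) * pd k (fun y => pd i (fun z => stokesPot ν z t) y) x


-- ===== Auxiliary development =====

lemma hasDerivAt_erf (y : ℝ) : HasDerivAt erf (2 / Real.sqrt π * Real.exp (-y ^ 2)) y := by
  have hc : Continuous fun s : ℝ => Real.exp (-s ^ 2) := by continuity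
  have h := (intervalIntegral.integral_hasStrictDerivAt_right
    (hc.intervalIntegrable 0 y) (hc.stronglyMeasurableAtFilter _ _) hc.continuousAt).hasDerivAt
  exact h.const_mul (2 / Real.sqrt π)

lemma hasFDerivAt_norm3 {x : E3} (hx : x ≠ 0) :
    HasFDerivAt (fun z : E3 => ‖z‖) ((‖x‖)⁻¹ • innerSL ℝ x) x := by
  have h1 : HasFDerivAt (fun z : E3 => ‖z‖ ^ 2) (2 • innerSL ℝ x) x :=
    (hasStrictFDerivAt_norm_sq x).hasFDerivAt
  have hx2 : ‖x‖ ^ 2 ≠ 0 := pow_ne_zero _ (norm_ne_zero_iff.2 hx)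
  have h2 := (Real.hasDerivAt_sqrt hx2).comp_hasFDerivAt x h1
  have he : (fun z : E3 => Real.sqrt (‖z‖ ^ 2)) = fun z : E3 => ‖z‖ :=
    funext fun z => Real.sqrt_sq (norm_nonneg z)
  simp only [Function.comp_def] at h2
  rw [he] at h2
  convert (preTransparency := .default) h2 using 1
  rw [Real.sqrt_sq (norm_nonneg x)]
  ext y
  have hnx : ‖x‖ ≠ 0 := norm_ne_zero_iff.2 hx
  simp only [ContinuousLinearMap.smul_apply, smul_eq_mul, nsmul_eq_mul, Nat.cast_ofNat]
  field_simp

lemma normCLM_apply (x : E3) (j : Fin 3) : ((‖x‖)⁻¹ • innerSL ℝ x) (e3 j) = x j / ‖x‖ := by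
  simp [e3, EuclideanSpace.inner_single_right]
  ring

lemma pd_radial {x : E3} {g : ℝ → ℝ} {g' : ℝ} (hg : HasDerivAt g g' ‖x‖) (hx : x ≠ 0)
    (j : Fin 3) : pd j (fun z => g ‖z‖) x = g' * (x j / ‖x‖) := by
  have h := hg.comp_hasFDerivAt x (hasFDerivAt_norm3 hx)
  simp only [Function.comp_def] at h
  unfold pd
  rw [h.fderiv]
  rw [ContinuousLinearMap.smul_apply, normCLM_apply, smul_eq_mul]

lemma diff_radial {x : E3} {g : ℝ → ℝ} {g' : ℝ} (hg : HasDerivAt g g' ‖x‖) (hx : x ≠ 0) :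
    DifferentiableAt ℝ (fun z : E3 => g ‖z‖) x :=
  (hg.comp_hasFDerivAt x (hasFDerivAt_norm3 hx)).differentiableAt

lemma diff_coord (i : Fin 3) (x : E3) : DifferentiableAt ℝ (fun z : E3 => z i) x :=
  (EuclideanSpace.proj (𝕜 := ℝ) i).differentiableAt

lemma pd_coord (i j : Fin 3) (x : E3) :
    pd j (fun z : E3 => z i) x = if i = j then 1 else 0 := by
  unfold pd
  have : (fun z : E3 => z i) = (EuclideanSpace.proj (𝕜 := ℝ) i : E3 → ℝ) := rfl
  rw [this, ContinuousLinearMap.fderiv]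
  simp [e3, EuclideanSpace.proj, EuclideanSpace.single_apply]

lemma pd_mul {x : E3} {f g : E3 → ℝ} (hf : DifferentiableAt ℝ f x)
    (hg : DifferentiableAt ℝ g x) (j : Fin 3) :
    pd j (fun z => f z * g z) x = pd j f x * g x + f x * pd j g x := by
  unfold pd
  rw [fderiv_fun_mul hf hg]
  simp
  ring

lemma pd_const_mul {x : E3} {f : E3 → ℝ} (c : ℝ) (hf : DifferentiableAt ℝ f x) (j : Fin 3) :
    pd j (fun z => c * f z) x = c * pd j f x := by
  unfold pd
  rw [fderiv_const_mul hf]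
  simp

lemma pd_add {x : E3} {f g : E3 → ℝ} (hf : DifferentiableAt ℝ f x)
    (hg : DifferentiableAt ℝ g x) (j : Fin 3) :
    pd j (fun z => f z + g z) x = pd j f x + pd j g x := by
  unfold pd
  rw [fderiv_fun_add hf hg]
  simp

lemma pd_congr {x : E3} {f g : E3 → ℝ} (h : ∀ y : E3, y ≠ 0 → f y = g y) (hx : x ≠ 0)
    (j : Fin 3) : pd j f x = pd j g x := by
  unfold pd
  have hev : f =ᶠ[nhds x] g := by
    filter_upwards [IsOpen.mem_nhds isOpen_compl_singleton hx] with y hy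
    exact h y hy
  rw [hev.fderiv_eq]


-- === Stage 2: scalar functions and their derivatives ===

def KK : ℝ := 2 / Real.sqrt π
def aa (ν t : ℝ) : ℝ := Real.sqrt (4 * ν * t)
def XX (ν r t : ℝ) : ℝ := Real.exp (-r ^ 2 / (4 * ν * t))
def EE (ν r t : ℝ) : ℝ := erf (r / aa ν t)

def g1 (ν r t : ℝ) : ℝ := KK * XX ν r t / (aa ν t * r ^ 2) - EE ν r t / r ^ 3
def g2 (ν r t : ℝ) : ℝ :=
  -(2 * KK * XX ν r t) / (aa ν t ^ 3 * r ^ 2) - 3 * KK * XX ν r t / (aa ν t * r ^ 4)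
    + 3 * EE ν r t / r ^ 5
def Bf (ν r t : ℝ) : ℝ :=
  -(KK * XX ν r t) / (2 * π * aa ν t ^ 3) - KK * XX ν r t / (4 * π * aa ν t * r ^ 2)
    + EE ν r t / (4 * π * r ^ 3)
def Cf (ν r t : ℝ) : ℝ :=
  KK * XX ν r t / (2 * π * aa ν t ^ 3 * r ^ 2) + 3 * KK * XX ν r t / (4 * π * aa ν t * r ^ 4)
    - 3 * EE ν r t / (4 * π * r ^ 5)
def Br (ν r t : ℝ) : ℝ :=
  KK * r * XX ν r t / (π * aa ν t ^ 5) + KK * XX ν r t / (2 * π * aa ν t ^ 3 * r)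
    + 3 * KK * XX ν r t / (4 * π * aa ν t * r ^ 3) - 3 * EE ν r t / (4 * π * r ^ 4)
def Brr (ν r t : ℝ) : ℝ :=
  -(2 * KK * r ^ 2 * XX ν r t) / (π * aa ν t ^ 7) - 2 * KK * XX ν r t / (π * aa ν t ^ 3 * r ^ 2)
    - 3 * KK * XX ν r t / (π * aa ν t * r ^ 4) + 3 * EE ν r t / (π * r ^ 5)
def Cr (ν r t : ℝ) : ℝ :=
  -(KK * XX ν r t) / (π * aa ν t ^ 5 * r) - 5 * KK * XX ν r t / (2 * π * aa ν t ^ 3 * r ^ 3)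
    - 15 * KK * XX ν r t / (4 * π * aa ν t * r ^ 5) + 15 * EE ν r t / (4 * π * r ^ 6)
def Crr (ν r t : ℝ) : ℝ :=
  2 * KK * XX ν r t / (π * aa ν t ^ 7) + 6 * KK * XX ν r t / (π * aa ν t ^ 5 * r ^ 2)
    + 15 * KK * XX ν r t / (π * aa ν t ^ 3 * r ^ 4)
    + 45 * KK * XX ν r t / (2 * π * aa ν t * r ^ 6) - 45 * EE ν r t / (2 * π * r ^ 7)
def Bt (ν r t : ℝ) : ℝ :=
  -(2 * KK * ν * r ^ 2 * XX ν r t) / (π * aa ν t ^ 7) + 2 * KK * ν * XX ν r t / (π * aa ν t ^ 5)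
def Ct (ν r t : ℝ) : ℝ := 2 * KK * ν * XX ν r t / (π * aa ν t ^ 7)
def St (ν r t : ℝ) : ℝ := -(2 * KK * ν * XX ν r t) / aa ν t ^ 3

section OneDim

variable {ν t r : ℝ}

lemma aa_pos (hν : 0 < ν) (ht : 0 < t) : 0 < aa ν t := Real.sqrt_pos.2 (by positivity)

lemma aa_sq (hν : 0 < ν) (ht : 0 < t) : aa ν t ^ 2 = 4 * ν * t :=
  Real.sq_sqrt (by positivity)

lemma exp_arg (hν : 0 < ν) (ht : 0 < t) (r : ℝ) :
    Real.exp (-(r / aa ν t) ^ 2) = XX ν r t := by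
  unfold XX
  congr 1
  rw [div_pow, aa_sq hν ht]
  ring

lemma hasDerivAt_EE_r (hν : 0 < ν) (ht : 0 < t) (r : ℝ) :
    HasDerivAt (fun r' => EE ν r' t) (KK * XX ν r t / aa ν t) r := by
  have h1 : HasDerivAt (fun r' : ℝ => r' / aa ν t) (1 / aa ν t) r := by
    simpa using (hasDerivAt_id r).div_const (aa ν t)
  have h2 := (hasDerivAt_erf (r / aa ν t)).comp r h1
  convert (preTransparency := .default) h2 using 1
  rw [exp_arg hν ht]
  unfold KK
  ring

lemma hasDerivAt_XX_r (hν : 0 < ν) (ht : 0 < t) (r : ℝ) :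
    HasDerivAt (fun r' => XX ν r' t) (-(2 * r) * XX ν r t / (4 * ν * t)) r := by
  have h1 : HasDerivAt (fun r' : ℝ => -r' ^ 2 / (4 * ν * t)) (-(2 * r) / (4 * ν * t)) r := by
    have := ((hasDerivAt_pow 2 r).neg).div_const (4 * ν * t)
    convert (preTransparency := .default) this using 1
    ring
  have h2 := h1.exp
  convert (preTransparency := .default) h2 using 1
  unfold XX
  ring

lemma hasDerivAt_aa (hν : 0 < ν) (ht : 0 < t) :
    HasDerivAt (fun s => aa ν s) (2 * ν / aa ν t) t := by
  have h1 : HasDerivAt (fun s : ℝ => 4 * ν * s) (4 * ν) t := by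
    simpa using (hasDerivAt_id t).const_mul (4 * ν)
  have h2 := (Real.hasDerivAt_sqrt (by positivity : (4 * ν * t) ≠ 0)).comp t h1
  have ha := aa_pos hν ht
  convert (preTransparency := .default) h2 using 1
  unfold aa
  rw [div_mul_eq_mul_div, one_mul]
  rw [eq_div_iff (by unfold aa at ha; positivity)]
  have : Real.sqrt (4 * ν * t) = aa ν t := rfl
  rw [this]
  field_simp
  nlinarith [aa_sq hν ht, ha]

lemma hasDerivAt_XX_t (hν : 0 < ν) (ht : 0 < t) (r : ℝ) :
    HasDerivAt (fun s => XX ν r s) (r ^ 2 / (4 * ν * t ^ 2) * XX ν r t) t := by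
  have hd : HasDerivAt (fun s : ℝ => 4 * ν * s) (4 * ν) t := by
    simpa using (hasDerivAt_id t).const_mul (4 * ν)
  have h1 := (hasDerivAt_const t (-r ^ 2)).div hd (by positivity)
  have h2 := h1.exp
  convert (preTransparency := .default) h2 using 1
  unfold XX
  simp only [Pi.div_apply]
  field_simp
  ring

lemma hasDerivAt_EE_t (hν : 0 < ν) (ht : 0 < t) (r : ℝ) :
    HasDerivAt (fun s => EE ν r s) (-(2 * KK * ν * r * XX ν r t) / aa ν t ^ 3) t := by
  have ha := aa_pos hν ht
  have h1 := (hasDerivAt_const t r).div (hasDerivAt_aa hν ht) ha.ne'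
  have h2 := (hasDerivAt_erf (r / aa ν t)).comp t h1
  convert (preTransparency := .default) h2 using 1
  rw [exp_arg hν ht]
  unfold KK
  field_simp
  ring

end OneDim

-- === Stage 3: derivatives of the composite scalar functions ===

section Composite

variable {ν t r : ℝ}

lemma hasDerivAt_pot_r (hν : 0 < ν) (ht : 0 < t) (hr : 0 < r) :
    HasDerivAt (fun r' => EE ν r' t / r') (r * g1 ν r t) r := by
  have ha := aa_pos hν ht
  have h := (hasDerivAt_EE_r hν ht r).div (hasDerivAt_id r) hr.ne'
  convert (preTransparency := .default) h using 1
  unfold g1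
  simp only [id]
  field_simp

lemma hasDerivAt_g1_r (hν : 0 < ν) (ht : 0 < t) (hr : 0 < r) :
    HasDerivAt (fun r' => g1 ν r' t) (r * g2 ν r t) r := by
  have ha := aa_pos hν ht
  have t1 := ((hasDerivAt_XX_r hν ht r).const_mul KK).div
    ((hasDerivAt_pow 2 r).const_mul (aa ν t)) (by positivity)
  have t2 := (hasDerivAt_EE_r hν ht r).div (hasDerivAt_pow 3 r) (by positivity)
  have h := t1.sub t2
  unfold g1
  convert (preTransparency := .default) h using 1
  unfold g2
  rw [← aa_sq hν ht]
  field_simp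
  ring

lemma hasDerivAt_Bf_r (hν : 0 < ν) (ht : 0 < t) (hr : 0 < r) :
    HasDerivAt (fun r' => Bf ν r' t) (Br ν r t) r := by
  have ha := aa_pos hν ht
  have hπ := Real.pi_pos
  have t1 := (((hasDerivAt_XX_r hν ht r).const_mul KK).neg).div_const (2 * π * aa ν t ^ 3)
  have t2 := ((hasDerivAt_XX_r hν ht r).const_mul KK).div
    ((hasDerivAt_pow 2 r).const_mul (4 * π * aa ν t)) (by positivity)
  have t3 := (hasDerivAt_EE_r hν ht r).div
    ((hasDerivAt_pow 3 r).const_mul (4 * π)) (by positivity)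
  have h := (t1.sub t2).add t3
  unfold Bf
  convert (preTransparency := .default) h using 1
  unfold Br
  rw [← aa_sq hν ht]
  field_simp
  ring

lemma hasDerivAt_Br_r (hν : 0 < ν) (ht : 0 < t) (hr : 0 < r) :
    HasDerivAt (fun r' => Br ν r' t) (Brr ν r t) r := by
  have ha := aa_pos hν ht
  have hπ := Real.pi_pos
  have t1 := (((hasDerivAt_id r).const_mul KK).mul (hasDerivAt_XX_r hν ht r)).div_const
    (π * aa ν t ^ 5)
  have t2 := ((hasDerivAt_XX_r hν ht r).const_mul KK).div
    ((hasDerivAt_id r).const_mul (2 * π * aa ν t ^ 3)) (by positivity)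
  have t3 := ((hasDerivAt_XX_r hν ht r).const_mul (3 * KK)).div
    ((hasDerivAt_pow 3 r).const_mul (4 * π * aa ν t)) (by positivity)
  have t4 := ((hasDerivAt_EE_r hν ht r).const_mul 3).div
    ((hasDerivAt_pow 4 r).const_mul (4 * π)) (by positivity)
  have h := ((t1.add t2).add t3).sub t4
  unfold Br
  convert (preTransparency := .default) h using 1
  unfold Brr
  simp only [id]
  rw [← aa_sq hν ht]
  field_simp
  ring

lemma hasDerivAt_Cf_r (hν : 0 < ν) (ht : 0 < t) (hr : 0 < r) :
    HasDerivAt (fun r' => Cf ν r' t) (Cr ν r t) r := by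
  have ha := aa_pos hν ht
  have hπ := Real.pi_pos
  have t1 := ((hasDerivAt_XX_r hν ht r).const_mul KK).div
    ((hasDerivAt_pow 2 r).const_mul (2 * π * aa ν t ^ 3)) (by positivity)
  have t2 := ((hasDerivAt_XX_r hν ht r).const_mul (3 * KK)).div
    ((hasDerivAt_pow 4 r).const_mul (4 * π * aa ν t)) (by positivity)
  have t3 := ((hasDerivAt_EE_r hν ht r).const_mul 3).div
    ((hasDerivAt_pow 5 r).const_mul (4 * π)) (by positivity)
  have h := (t1.add t2).sub t3
  unfold Cf
  convert (preTransparency := .default) h using 1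
  unfold Cr
  rw [← aa_sq hν ht]
  field_simp
  ring

lemma hasDerivAt_Cr_r (hν : 0 < ν) (ht : 0 < t) (hr : 0 < r) :
    HasDerivAt (fun r' => Cr ν r' t) (Crr ν r t) r := by
  have ha := aa_pos hν ht
  have hπ := Real.pi_pos
  have t1 := (((hasDerivAt_XX_r hν ht r).const_mul KK).neg).div
    ((hasDerivAt_id r).const_mul (π * aa ν t ^ 5)) (by positivity)
  have t2 := ((hasDerivAt_XX_r hν ht r).const_mul (5 * KK)).div
    ((hasDerivAt_pow 3 r).const_mul (2 * π * aa ν t ^ 3)) (by positivity)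
  have t3 := ((hasDerivAt_XX_r hν ht r).const_mul (15 * KK)).div
    ((hasDerivAt_pow 5 r).const_mul (4 * π * aa ν t)) (by positivity)
  have t4 := ((hasDerivAt_EE_r hν ht r).const_mul 15).div
    ((hasDerivAt_pow 6 r).const_mul (4 * π)) (by positivity)
  have h := ((t1.sub t2).sub t3).add t4
  unfold Cr
  convert (preTransparency := .default) h using 1
  unfold Crr
  simp only [id, Pi.neg_apply]
  rw [← aa_sq hν ht]
  field_simp
  ring

lemma hasDerivAt_pot_t (hν : 0 < ν) (ht : 0 < t) (hr : 0 < r) :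
    HasDerivAt (fun s => EE ν r s / r) (St ν r t) t := by
  have ha := aa_pos hν ht
  have h := (hasDerivAt_EE_t hν ht r).div_const r
  convert (preTransparency := .default) h using 1
  unfold St
  field_simp

lemma t_elim (hν : 0 < ν) (ht : 0 < t) : t = aa ν t ^ 2 / (4 * ν) := by
  rw [aa_sq hν ht]; field_simp

lemma hasDerivAt_Bf_t (hν : 0 < ν) (ht : 0 < t) (hr : 0 < r) :
    HasDerivAt (fun s => Bf ν r s) (Bt ν r t) t := by
  have ha := aa_pos hν ht
  have hπ := Real.pi_pos
  have t1 := (((hasDerivAt_XX_t hν ht r).const_mul KK).neg).div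
    (((hasDerivAt_aa hν ht).pow 3).const_mul (2 * π)) (by simp only [Pi.pow_apply]; positivity)
  have t2 := ((hasDerivAt_XX_t hν ht r).const_mul KK).div
    (((hasDerivAt_aa hν ht).const_mul (4 * π)).mul_const (r ^ 2)) (by positivity)
  have t3 := (hasDerivAt_EE_t hν ht r).div_const (4 * π * r ^ 3)
  have h := (t1.sub t2).add t3
  unfold Bf
  convert (preTransparency := .default) h using 1
  unfold Bt
  simp only [Pi.pow_apply, Pi.neg_apply]
  have hsq : aa ν t ^ 2 = 4 * ν * t := aa_sq hν ht
  have hte := t_elim hν ht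
  generalize hA : aa ν t = A at hsq hte ⊢
  have hA0 : A ≠ 0 := by rw [← hA]; exact ha.ne'
  rw [hte]
  field_simp
  ring

lemma hasDerivAt_Cf_t (hν : 0 < ν) (ht : 0 < t) (hr : 0 < r) :
    HasDerivAt (fun s => Cf ν r s) (Ct ν r t) t := by
  have ha := aa_pos hν ht
  have hπ := Real.pi_pos
  have t1 := ((hasDerivAt_XX_t hν ht r).const_mul KK).div
    ((((hasDerivAt_aa hν ht).pow 3).const_mul (2 * π)).mul_const (r ^ 2)) (by simp only [Pi.pow_apply]; positivity)
  have t2 := ((hasDerivAt_XX_t hν ht r).const_mul (3 * KK)).div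
    (((hasDerivAt_aa hν ht).const_mul (4 * π)).mul_const (r ^ 4)) (by positivity)
  have t3 := ((hasDerivAt_EE_t hν ht r).const_mul 3).div_const (4 * π * r ^ 5)
  have h := (t1.add t2).sub t3
  unfold Cf
  convert (preTransparency := .default) h using 1
  unfold Ct
  simp only [Pi.pow_apply]
  have hsq : aa ν t ^ 2 = 4 * ν * t := aa_sq hν ht
  have hte := t_elim hν ht
  generalize hA : aa ν t = A at hsq hte ⊢
  have hA0 : A ≠ 0 := by rw [← hA]; exact ha.ne'
  rw [hte]
  field_simp
  ring

end Composite

-- === Stage 4: spatial derivatives of the stokeslet ===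

section Spatial

variable {ν t : ℝ} {x : E3}

lemma pd_radial2 {x : E3} {f : E3 → ℝ} {g : ℝ → ℝ} {g' : ℝ} (hfg : ∀ z, f z = g ‖z‖)
    (hg : HasDerivAt g g' ‖x‖) (hx : x ≠ 0) (j : Fin 3) :
    pd j f x = g' * (x j / ‖x‖) := by
  have hf : f = fun z => g ‖z‖ := funext hfg
  rw [hf]
  exact pd_radial hg hx j

lemma diff_radial2 {x : E3} {f : E3 → ℝ} {g : ℝ → ℝ} {g' : ℝ} (hfg : ∀ z, f z = g ‖z‖)
    (hg : HasDerivAt g g' ‖x‖) (hx : x ≠ 0) : DifferentiableAt ℝ f x := by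
  have hf : f = fun z => g ‖z‖ := funext hfg
  rw [hf]
  exact diff_radial hg hx

lemma pd_pot (hν : 0 < ν) (ht : 0 < t) (hx : x ≠ 0) (i : Fin 3) :
    pd i (fun z => stokesPot ν z t) x = x i * g1 ν ‖x‖ t := by
  have hr : (0:ℝ) < ‖x‖ := norm_pos_iff.2 hx
  rw [pd_radial2 (f := fun z => stokesPot ν z t) (g := fun r' => EE ν r' t / r')
    (fun z => rfl) (hasDerivAt_pot_r hν ht hr) hx i]
  field_simp

lemma pd_pd_pot (hν : 0 < ν) (ht : 0 < t) (hx : x ≠ 0) (i k : Fin 3) :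
    pd k (fun y => pd i (fun z => stokesPot ν z t) y) x
      = (if i = k then 1 else 0) * g1 ν ‖x‖ t + x i * x k * g2 ν ‖x‖ t := by
  have hr : (0:ℝ) < ‖x‖ := norm_pos_iff.2 hx
  rw [pd_congr (f := fun y => pd i (fun z => stokesPot ν z t) y)
    (g := fun y : E3 => y i * g1 ν ‖y‖ t) (fun y hy => pd_pot hν ht hy i) hx k]
  rw [pd_mul (diff_coord i x)
    (diff_radial2 (g := fun r' => g1 ν r' t) (fun z => rfl) (hasDerivAt_g1_r hν ht hr) hx) k]
  rw [pd_coord i k x,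
    pd_radial2 (g := fun r' => g1 ν r' t) (fun z => rfl) (hasDerivAt_g1_r hν ht hr) hx k]
  by_cases hik : i = k
  · simp only [if_pos hik]
    field_simp
  · simp only [if_neg hik]
    field_simp

lemma stokeslet_eq (hν : 0 < ν) (ht : 0 < t) (hx : x ≠ 0) (k i : Fin 3) :
    stokeslet ν k i x t
      = (if k = i then 1 else 0) * Bf ν ‖x‖ t + x k * x i * Cf ν ‖x‖ t := by
  have hr : (0:ℝ) < ‖x‖ := norm_pos_iff.2 hx
  have ha := aa_pos hν ht
  have hπ := Real.pi_pos
  unfold stokeslet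
  have hderiv : deriv (fun s => stokesPot ν x s) t = St ν ‖x‖ t := by
    have hfun : (fun s => stokesPot ν x s) = fun s => EE ν ‖x‖ s / ‖x‖ := rfl
    rw [hfun]
    exact (hasDerivAt_pot_t hν ht hr).deriv
  rw [hderiv, pd_pd_pot hν ht hx i k]
  by_cases hki : k = i
  · have hik : i = k := hki.symm
    simp only [if_pos hki, if_pos hik]
    unfold Bf Cf St g1 g2
    field_simp
    ring
  · have hik : ¬ (i = k) := fun h => hki h.symm
    simp only [if_neg hki, if_neg hik]
    unfold Cf St g1 g2
    field_simp
    ring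

lemma deriv_stokeslet_t (hν : 0 < ν) (ht : 0 < t) (hx : x ≠ 0) (k i : Fin 3) :
    deriv (fun s => stokeslet ν k i x s) t
      = (if k = i then 1 else 0) * Bt ν ‖x‖ t + x k * x i * Ct ν ‖x‖ t := by
  have hr : (0:ℝ) < ‖x‖ := norm_pos_iff.2 hx
  have hev : (fun s => stokeslet ν k i x s) =ᶠ[nhds t]
      (fun s => (if k = i then (1:ℝ) else 0) * Bf ν ‖x‖ s + x k * x i * Cf ν ‖x‖ s) := by
    filter_upwards [IsOpen.mem_nhds isOpen_Ioi ht] with s hs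
    exact stokeslet_eq hν hs hx k i
  rw [hev.deriv_eq]
  exact (((hasDerivAt_Bf_t hν ht hr).const_mul _).add
    ((hasDerivAt_Cf_t hν ht hr).const_mul _)).deriv

lemma pd_stokeslet (hν : 0 < ν) (ht : 0 < t) (hx : x ≠ 0) (k i j : Fin 3) :
    pd j (fun z => stokeslet ν k i z t) x
      = (if k = i then 1 else 0) * (x j * (Br ν ‖x‖ t / ‖x‖))
        + ((if k = j then 1 else 0) * (x i * Cf ν ‖x‖ t)
          + ((if i = j then 1 else 0) * (x k * Cf ν ‖x‖ t)
            + (x k * x i) * (x j * (Cr ν ‖x‖ t / ‖x‖)))) := by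
  have hr : (0:ℝ) < ‖x‖ := norm_pos_iff.2 hx
  rw [pd_congr (f := fun z => stokeslet ν k i z t)
    (g := fun z : E3 => (if k = i then (1:ℝ) else 0) * Bf ν ‖z‖ t + z k * z i * Cf ν ‖z‖ t)
    (fun z hz => stokeslet_eq hν ht hz k i) hx j]
  have hB := diff_radial2 (x := x) (g := fun r' => Bf ν r' t) (fun z => rfl)
    (hasDerivAt_Bf_r hν ht hr) hx
  have hC := diff_radial2 (x := x) (g := fun r' => Cf ν r' t) (fun z => rfl)
    (hasDerivAt_Cf_r hν ht hr) hx
  rw [pd_add (hB.const_mul _) (((diff_coord k x).fun_mul (diff_coord i x)).fun_mul hC) j]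
  rw [pd_const_mul _ hB j]
  rw [pd_mul ((diff_coord k x).fun_mul (diff_coord i x)) hC j]
  rw [pd_mul (diff_coord k x) (diff_coord i x) j]
  rw [pd_coord k j x, pd_coord i j x]
  rw [pd_radial2 (g := fun r' => Bf ν r' t) (fun z => rfl) (hasDerivAt_Bf_r hν ht hr) hx j]
  rw [pd_radial2 (g := fun r' => Cf ν r' t) (fun z => rfl) (hasDerivAt_Cf_r hν ht hr) hx j]
  ring

end Spatial

-- === Stage 5: second spatial derivatives, summation, main theorem ===

section Final

variable {ν t : ℝ} {x : E3}

lemma norm_sq_eq (x : E3) : x 0 ^ 2 + x 1 ^ 2 + x 2 ^ 2 = ‖x‖ ^ 2 := by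
  have h : ‖x‖ ^ 2 = ∑ i, ‖x i‖ ^ 2 := by
    rw [EuclideanSpace.norm_eq, Real.sq_sqrt (by positivity)]
  rw [h, Fin.sum_univ_three]
  simp [Real.norm_eq_abs, sq_abs]

lemma pd_pd_stokeslet (hν : 0 < ν) (ht : 0 < t) (hx : x ≠ 0) (k i j : Fin 3) :
    pd j (fun y => pd j (fun z => stokeslet ν k i z t) y) x
      = (if k = i then 1 else 0) * (Br ν ‖x‖ t / ‖x‖)
        + (if k = i then 1 else 0) * ((Brr ν ‖x‖ t * ‖x‖ - Br ν ‖x‖ t) / ‖x‖ ^ 2 / ‖x‖)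
            * x j ^ 2
        + (if k = j then 1 else 0) * ((if i = j then 1 else 0) * Cf ν ‖x‖ t
            + 2 * (Cr ν ‖x‖ t / ‖x‖) * x i * x j)
        + (if i = j then 1 else 0) * ((if k = j then 1 else 0) * Cf ν ‖x‖ t
            + 2 * (Cr ν ‖x‖ t / ‖x‖) * x k * x j)
        + (x k * x i * (Cr ν ‖x‖ t / ‖x‖)
            + x k * x i * ((Crr ν ‖x‖ t * ‖x‖ - Cr ν ‖x‖ t) / ‖x‖ ^ 2 / ‖x‖) * x j ^ 2) := by
  have hr : (0:ℝ) < ‖x‖ := norm_pos_iff.2 hx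
  have hφ := (hasDerivAt_Br_r hν ht hr).div (hasDerivAt_id ‖x‖) hr.ne'
  have hψ := (hasDerivAt_Cr_r hν ht hr).div (hasDerivAt_id ‖x‖) hr.ne'
  simp only [id_eq] at hφ hψ
  have dφ := diff_radial2 (x := x) (g := fun r' => Br ν r' t / r') (fun z => rfl) hφ hx
  have dψ := diff_radial2 (x := x) (g := fun r' => Cr ν r' t / r') (fun z => rfl) hψ hx
  have dC := diff_radial2 (x := x) (g := fun r' => Cf ν r' t) (fun z => rfl)
    (hasDerivAt_Cf_r hν ht hr) hx
  rw [pd_congr (f := fun y => pd j (fun z => stokeslet ν k i z t) y)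
    (g := fun y : E3 => (if k = i then (1:ℝ) else 0) * (y j * (Br ν ‖y‖ t / ‖y‖))
      + ((if k = j then (1:ℝ) else 0) * (y i * Cf ν ‖y‖ t)
        + ((if i = j then (1:ℝ) else 0) * (y k * Cf ν ‖y‖ t)
          + (y k * y i) * (y j * (Cr ν ‖y‖ t / ‖y‖)))))
    (fun y hy => pd_stokeslet hν ht hy k i j) hx j]
  rw [pd_add (((diff_coord j x).fun_mul dφ).const_mul _)
    ((((diff_coord i x).fun_mul dC).const_mul _).fun_add
      ((((diff_coord k x).fun_mul dC).const_mul _).fun_add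
        (((diff_coord k x).fun_mul (diff_coord i x)).fun_mul ((diff_coord j x).fun_mul dψ)))) j]
  rw [pd_add (((diff_coord i x).fun_mul dC).const_mul _)
    ((((diff_coord k x).fun_mul dC).const_mul _).fun_add
      (((diff_coord k x).fun_mul (diff_coord i x)).fun_mul ((diff_coord j x).fun_mul dψ))) j]
  rw [pd_add (((diff_coord k x).fun_mul dC).const_mul _)
    (((diff_coord k x).fun_mul (diff_coord i x)).fun_mul ((diff_coord j x).fun_mul dψ)) j]
  rw [pd_const_mul _ ((diff_coord j x).fun_mul dφ) j]
  rw [pd_const_mul _ ((diff_coord i x).fun_mul dC) j]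
  rw [pd_const_mul _ ((diff_coord k x).fun_mul dC) j]
  rw [pd_mul ((diff_coord k x).fun_mul (diff_coord i x)) ((diff_coord j x).fun_mul dψ) j]
  rw [pd_mul (diff_coord k x) (diff_coord i x) j]
  rw [pd_mul (diff_coord j x) dφ j]
  rw [pd_mul (diff_coord i x) dC j]
  rw [pd_mul (diff_coord k x) dC j]
  rw [pd_mul (diff_coord j x) dψ j]
  rw [pd_coord j j x, pd_coord i j x, pd_coord k j x]
  rw [pd_radial2 (g := fun r' => Br ν r' t / r') (fun z => rfl) hφ hx j]
  rw [pd_radial2 (g := fun r' => Cr ν r' t / r') (fun z => rfl) hψ hx j]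
  rw [pd_radial2 (g := fun r' => Cf ν r' t) (fun z => rfl) (hasDerivAt_Cf_r hν ht hr) hx j]
  simp only [if_pos rfl, eq_self_iff_true, if_true]
  ring

lemma sum3_split (x : E3) (k i : Fin 3) (c w1 Cf' w2 c2 w3 : ℝ) :
    (∑ j : Fin 3, (c + w1 * x j ^ 2
      + (if k = j then (1:ℝ) else 0) * ((if i = j then (1:ℝ) else 0) * Cf' + w2 * x i * x j)
      + (if i = j then (1:ℝ) else 0) * ((if k = j then (1:ℝ) else 0) * Cf' + w2 * x k * x j)
      + (c2 + w3 * x j ^ 2)))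
    = 3 * c + w1 * ‖x‖ ^ 2 + (if k = i then (1:ℝ) else 0) * (2 * Cf')
      + 2 * w2 * x i * x k + 3 * c2 + w3 * ‖x‖ ^ 2 := by
  have hr2 := norm_sq_eq x
  rw [Fin.sum_univ_three]
  fin_cases k <;> fin_cases i <;>
    simp <;> linear_combination (w1 + w3) * hr2

lemma heatB (hν : 0 < ν) (ht : 0 < t) (hr : 0 < r) :
    Bt ν r t = ν * (Brr ν r t + 2 * Br ν r t / r + 2 * Cf ν r t) := by
  have ha := aa_pos hν ht
  have hπ := Real.pi_pos
  unfold Bt Brr Br Cf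
  field_simp
  ring

lemma heatC (hν : 0 < ν) (ht : 0 < t) (hr : 0 < r) :
    Ct ν r t = ν * (Crr ν r t + 6 * Cr ν r t / r) := by
  have ha := aa_pos hν ht
  have hπ := Real.pi_pos
  unfold Ct Crr Cr
  field_simp
  ring

end Final


/-- Each component of the time-dependent Stokeslet velocity satisfies the heat equation
away from the singular origin: `∂u^S_{ki}/∂t = ν Δ_x u^S_{ki}` for `x ≠ 0`, `t > 0`
(hence the unsteady Stokes equation holds there, the Stokeslet pressure vanishing
for `t > 0`). -/
theorem stokeslet_satisfies_heat_equation (ν : ℝ) (hν : 0 < ν) (i k : Fin 3)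
    (x : E3) (hx : x ≠ 0) (t : ℝ) (ht : 0 < t) :
    deriv (fun s => stokeslet ν k i x s) t
      = ν * ∑ j : Fin 3, pd j (fun y => pd j (fun z => stokeslet ν k i z t) y) x := by
  have hr : (0:ℝ) < ‖x‖ := norm_pos_iff.2 hx
  rw [deriv_stokeslet_t hν ht hx k i]
  have hs : ∑ j : Fin 3, pd j (fun y => pd j (fun z => stokeslet ν k i z t) y) x
      = 3 * ((if k = i then (1:ℝ) else 0) * (Br ν ‖x‖ t / ‖x‖))
        + (if k = i then (1:ℝ) else 0) * ((Brr ν ‖x‖ t * ‖x‖ - Br ν ‖x‖ t) / ‖x‖ ^ 2 / ‖x‖)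
            * ‖x‖ ^ 2
        + (if k = i then (1:ℝ) else 0) * (2 * Cf ν ‖x‖ t)
        + 2 * (2 * (Cr ν ‖x‖ t / ‖x‖)) * x i * x k
        + 3 * (x k * x i * (Cr ν ‖x‖ t / ‖x‖))
        + x k * x i * ((Crr ν ‖x‖ t * ‖x‖ - Cr ν ‖x‖ t) / ‖x‖ ^ 2 / ‖x‖) * ‖x‖ ^ 2 := by
    rw [Finset.sum_congr rfl (fun j _ => pd_pd_stokeslet hν ht hx k i j)]
    exact sum3_split x k i _ _ _ _ _ _
  rw [hs]
  rw [heatB hν ht hr, heatC hν ht hr]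
  by_cases hki : k = i
  · simp only [if_pos hki]
    field_simp
    ring
  · simp only [if_neg hki]
    field_simp
    ring
end
end

section
/- For every real ν > 0, every fixed t > 0 and all indices i,k ∈ {1,2,3}, the time-dependent Stokeslet velocity decays like a Stokeslet in the far field: there exists a constant C > 0 such that |u^S_{ki}(x,t)| ≤ C·‖x‖^(−3) for all x ∈ ℝ³ with ‖x‖ ≥ 1. -/
open Real MeasureTheory

noncomputable section

lemma abs_erf_le (y : ℝ) : |erf y| ≤ 2 := by
  have hInt : Integrable (fun s : ℝ => Real.exp (-s ^ 2)) := by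
    simpa using integrable_exp_neg_mul_sq (one_pos)
  have h1 : |∫ s in (0:ℝ)..y, Real.exp (-s ^ 2)| ≤ ∫ s : ℝ, Real.exp (-s ^ 2) := by
    rw [intervalIntegral.intervalIntegral_eq_integral_uIoc]
    calc |(if (0:ℝ) ≤ y then (1:ℝ) else -1) • ∫ s in Set.uIoc 0 y, Real.exp (-s ^ 2)|
        ≤ |∫ s in Set.uIoc 0 y, Real.exp (-s ^ 2)| := by
          split_ifs <;> simp
      _ ≤ ∫ s in Set.uIoc 0 y, Real.exp (-s ^ 2) := by
          rw [abs_of_nonneg (setIntegral_nonneg measurableSet_uIoc fun s _ => (Real.exp_pos _).le)]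
      _ ≤ ∫ s : ℝ, Real.exp (-s ^ 2) :=
          setIntegral_le_integral hInt (Filter.Eventually.of_forall fun s => (Real.exp_pos _).le)
  have h2 : (∫ s : ℝ, Real.exp (-s ^ 2)) = Real.sqrt π := by
    simpa using integral_gaussian 1
  have hπ : (0:ℝ) < Real.sqrt π := Real.sqrt_pos.mpr Real.pi_pos
  calc |erf y| = (2 / Real.sqrt π) * |∫ s in (0:ℝ)..y, Real.exp (-s ^ 2)| := by
        rw [erf, abs_mul, abs_of_nonneg (by positivity)]
    _ ≤ (2 / Real.sqrt π) * Real.sqrt π := by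
        apply mul_le_mul_of_nonneg_left (h1.trans_eq h2) (by positivity)
    _ = 2 := by field_simp

lemma exp_neg_le (y : ℝ) (hy : 0 < y) : Real.exp (-y) ≤ 4 / y ^ 2 := by
  have h : y ^ 2 / 4 ≤ Real.exp y := by
    have h1 : 1 + y / 2 ≤ Real.exp (y / 2) := Real.add_one_le_exp (y / 2) |>.trans_eq' (by ring)
    have h2 : Real.exp y = Real.exp (y/2) * Real.exp (y/2) := by
      rw [← Real.exp_add]; ring_nf
    nlinarith [Real.exp_pos (y/2)]
  rw [Real.exp_neg, inv_le_comm₀ (Real.exp_pos y) (by positivity), inv_div]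
  linarith

def P0 (c q : ℝ) : ℝ := erf (Real.sqrt q / c) / Real.sqrt q
def P1 (c q : ℝ) : ℝ :=
  Real.exp (-q / c ^ 2) / (Real.sqrt π * c * q) - erf (Real.sqrt q / c) / (2 * q * Real.sqrt q)
def P2 (c q : ℝ) : ℝ :=
  -Real.exp (-q / c ^ 2) / (Real.sqrt π * c ^ 3 * q)
    - 3 * Real.exp (-q / c ^ 2) / (2 * Real.sqrt π * c * q ^ 2)
    + 3 * erf (Real.sqrt q / c) / (4 * q ^ 2 * Real.sqrt q)

lemma sqrtπ_pos : (0:ℝ) < Real.sqrt π := Real.sqrt_pos.mpr Real.pi_pos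

lemma hasDerivAt_erf_sqrt (c q : ℝ) (hc : 0 < c) (hq : 0 < q) :
    HasDerivAt (fun u => erf (Real.sqrt u / c))
      (Real.exp (-q / c ^ 2) / (Real.sqrt π * c * Real.sqrt q)) q := by
  have hs : 0 < Real.sqrt q := Real.sqrt_pos.mpr hq
  have h1 : HasDerivAt (fun u => Real.sqrt u / c) (1 / (2 * Real.sqrt q) / c) q :=
    (Real.hasDerivAt_sqrt hq.ne').div_const c
  have h2 := (hasDerivAt_erf (Real.sqrt q / c)).comp q h1
  refine h2.congr_deriv ?_; symm
  rw [div_pow, Real.sq_sqrt hq.le]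
  field_simp
  
lemma hasDerivAt_P0 (c q : ℝ) (hc : 0 < c) (hq : 0 < q) :
    HasDerivAt (P0 c) (P1 c q) q := by
  have hs : 0 < Real.sqrt q := Real.sqrt_pos.mpr hq
  have h := (hasDerivAt_erf_sqrt c q hc hq).div (Real.hasDerivAt_sqrt hq.ne') hs.ne'
  refine h.congr_deriv ?_; symm
  rw [P1]
  set s := Real.sqrt q with hsdef
  have hq2 : q = s ^ 2 := (Real.sq_sqrt hq.le).symm
  rw [hq2]
  field_simp

lemma hasDerivAt_P1 (c q : ℝ) (hc : 0 < c) (hq : 0 < q) :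
    HasDerivAt (P1 c) (P2 c q) q := by
  have hs : 0 < Real.sqrt q := Real.sqrt_pos.mpr hq
  have hπ := sqrtπ_pos
  -- first term
  have hA : HasDerivAt (fun u => Real.exp (-u / c ^ 2) / (Real.sqrt π * c * u))
      ((-1/c^2) * Real.exp (-q / c ^ 2) / (Real.sqrt π * c * q)
        - Real.exp (-q / c ^ 2) / (Real.sqrt π * c * q ^ 2)) q := by
    have he : HasDerivAt (fun u : ℝ => Real.exp (-u / c ^ 2))
        ((-1/c^2) * Real.exp (-q / c ^ 2)) q := by
      have : HasDerivAt (fun u : ℝ => -u / c ^ 2) (-1/c^2) q := by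
        simpa using (((hasDerivAt_id q).neg).div_const (c^2))
      simpa [mul_comm, Function.comp_def] using (Real.hasDerivAt_exp (-q / c^2)).comp q this
    have hd : HasDerivAt (fun u : ℝ => Real.sqrt π * c * u) (Real.sqrt π * c) q := by
      simpa using (hasDerivAt_id q).const_mul (Real.sqrt π * c)
    have := he.div hd (by positivity)
    refine this.congr_deriv ?_; symm
    field_simp
  have hB : HasDerivAt (fun u => erf (Real.sqrt u / c) / (2 * u * Real.sqrt u))
      (Real.exp (-q / c ^ 2) / (2 * Real.sqrt π * c * q ^ 2)
        - 3 * erf (Real.sqrt q / c) / (4 * q ^ 2 * Real.sqrt q)) q := by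
    have hd : HasDerivAt (fun u : ℝ => 2 * u * Real.sqrt u)
        (3 * Real.sqrt q) q := by
      have h1 : HasDerivAt (fun u : ℝ => 2 * u) 2 q := by
        simpa using (hasDerivAt_id q).const_mul (2:ℝ)
      have := h1.mul (Real.hasDerivAt_sqrt hq.ne')
      refine this.congr_deriv ?_; symm
      have : q / Real.sqrt q = Real.sqrt q := Real.div_sqrt
      field_simp
      nlinarith [Real.sq_sqrt hq.le]
    have := (hasDerivAt_erf_sqrt c q hc hq).div hd (by positivity)
    refine this.congr_deriv ?_; symm
    set s := Real.sqrt q with hsdef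
    have hq2 : q = s ^ 2 := (Real.sq_sqrt hq.le).symm
    rw [hq2]
    field_simp
    ring
  have := hA.sub hB
  refine this.congr_deriv ?_; symm
  rw [P2]; ring

lemma stokesPot_eq (ν t : ℝ) (z : E3) :
    stokesPot ν z t = P0 (Real.sqrt (4 * ν * t)) (‖z‖ ^ 2) := by
  rw [stokesPot, P0, Real.sqrt_sq (norm_nonneg z)]

lemma hasFDerivAt_stokesPot (ν t : ℝ) (hc : 0 < Real.sqrt (4 * ν * t)) (y : E3) (hy : y ≠ 0) :
    HasFDerivAt (fun z => stokesPot ν z t)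
      (P1 (Real.sqrt (4 * ν * t)) (‖y‖ ^ 2) • (2 • innerSL ℝ y)) y := by
  have hq : 0 < ‖y‖ ^ 2 := by
    have := norm_pos_iff.mpr hy
    positivity
  have h1 : HasFDerivAt (fun z : E3 => ‖z‖ ^ 2) (2 • innerSL ℝ y) y :=
    (hasStrictFDerivAt_norm_sq y).hasFDerivAt
  have h2 := (hasDerivAt_P0 _ _ hc hq).comp_hasFDerivAt y h1
  have : (fun z => stokesPot ν z t) = P0 (Real.sqrt (4 * ν * t)) ∘ fun z : E3 => ‖z‖ ^ 2 := by
    funext z; exact stokesPot_eq ν t z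
  rw [this]
  exact h2

lemma pd_stokesPot (ν t : ℝ) (hc : 0 < Real.sqrt (4 * ν * t)) (i : Fin 3) (y : E3) (hy : y ≠ 0) :
    pd i (fun z => stokesPot ν z t) y
      = 2 * P1 (Real.sqrt (4 * ν * t)) (‖y‖ ^ 2) * y i := by
  rw [pd, (hasFDerivAt_stokesPot ν t hc y hy).fderiv]
  simp only [ContinuousLinearMap.smul_apply, ContinuousLinearMap.smul_apply,
    innerSL_apply_apply, smul_eq_mul]
  rw [e3, EuclideanSpace.inner_single_right]
  simp [real_inner_comm]
  ring

lemma pd_pd_stokesPot (ν t : ℝ) (hc : 0 < Real.sqrt (4 * ν * t)) (i k : Fin 3) (x : E3)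
    (hx : x ≠ 0) :
    pd k (fun y => pd i (fun z => stokesPot ν z t) y) x
      = 4 * P2 (Real.sqrt (4 * ν * t)) (‖x‖ ^ 2) * x i * x k
        + 2 * P1 (Real.sqrt (4 * ν * t)) (‖x‖ ^ 2) * (if k = i then 1 else 0) := by
  set c := Real.sqrt (4 * ν * t)
  have hq : 0 < ‖x‖ ^ 2 := by have := norm_pos_iff.mpr hx; positivity
  set F : E3 → ℝ := fun y => 2 * P1 c (‖y‖ ^ 2) * y i with hF
  have hEq : (fun y => pd i (fun z => stokesPot ν z t) y) =ᶠ[nhds x] F := by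
    filter_upwards [eventually_ne_nhds hx] with y hy
    exact pd_stokesPot ν t hc i y hy
  have hf : HasFDerivAt (fun y : E3 => 2 * P1 c (‖y‖ ^ 2))
      ((2 : ℝ) • (P2 c (‖x‖ ^ 2) • (2 • innerSL ℝ x))) x := by
    have h1 : HasFDerivAt (fun z : E3 => ‖z‖ ^ 2) (2 • innerSL ℝ x) x :=
      (hasStrictFDerivAt_norm_sq x).hasFDerivAt
    exact ((hasDerivAt_P1 c _ hc hq).comp_hasFDerivAt x h1).const_mul 2
  have hg : HasFDerivAt (fun y : E3 => y i) (EuclideanSpace.proj (𝕜 := ℝ) (ι := Fin 3) i) x :=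
    (EuclideanSpace.proj (𝕜 := ℝ) (ι := Fin 3) i).hasFDerivAt
  have hFd : HasFDerivAt F
      ((2 * P1 c (‖x‖ ^ 2)) • (EuclideanSpace.proj (𝕜 := ℝ) i)
        + x i • ((2 : ℝ) • (P2 c (‖x‖ ^ 2) • (2 • innerSL ℝ x)))) x := hf.mul hg
  rw [pd, hEq.fderiv_eq, hFd.fderiv]
  simp only [ContinuousLinearMap.add_apply, ContinuousLinearMap.smul_apply,
    innerSL_apply_apply, smul_eq_mul]
  rw [e3, EuclideanSpace.inner_single_right]
  have : (EuclideanSpace.proj (𝕜 := ℝ) i) (EuclideanSpace.single k (1:ℝ))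
      = if k = i then 1 else 0 := by
    by_cases h : k = i
    · simp [EuclideanSpace.single_apply, h]
    · rw [if_neg h, show (EuclideanSpace.proj (𝕜 := ℝ) i) (EuclideanSpace.single k (1:ℝ))
            = (EuclideanSpace.single k (1:ℝ)) i from rfl,
          EuclideanSpace.single_apply, if_neg (fun h' : i = k => h h'.symm)]
  rw [this]
  simp [real_inner_comm]
  ring

lemma deriv_stokesPot_time (ν t : ℝ) (hν : 0 < ν) (ht : 0 < t) (x : E3) (hx : x ≠ 0) :
    HasDerivAt (fun s => stokesPot ν x s)
      (-(4 * ν) * Real.exp (-‖x‖ ^ 2 / Real.sqrt (4 * ν * t) ^ 2)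
        / (Real.sqrt π * Real.sqrt (4 * ν * t) ^ 3)) t := by
  have hr : 0 < ‖x‖ := norm_pos_iff.mpr hx
  have h4 : 0 < 4 * ν * t := by positivity
  have hc : 0 < Real.sqrt (4 * ν * t) := Real.sqrt_pos.mpr h4
  set c := Real.sqrt (4 * ν * t) with hcdef
  have h1 : HasDerivAt (fun s : ℝ => 4 * ν * s) (4 * ν) t := by
    simpa using (hasDerivAt_id t).const_mul (4 * ν)
  have h2 : HasDerivAt (fun s : ℝ => Real.sqrt (4 * ν * s)) (4 * ν / (2 * c)) t := by
    have := (Real.hasDerivAt_sqrt h4.ne').comp t h1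
    refine this.congr_deriv ?_; symm
    rw [← hcdef]; ring
  have h3 : HasDerivAt (fun s : ℝ => ‖x‖ / Real.sqrt (4 * ν * s))
      (-(‖x‖ * (4 * ν / (2 * c))) / c ^ 2) t := by
    have := (hasDerivAt_const t ‖x‖).div h2 hc.ne'
    refine this.congr_deriv ?_; symm
    rw [← hcdef]; ring
  have h4' := (hasDerivAt_erf (‖x‖ / c)).comp t h3
  have h5 := h4'.div_const ‖x‖
  have : (fun s => stokesPot ν x s) = fun s => erf (‖x‖ / Real.sqrt (4 * ν * s)) / ‖x‖ := by
    funext s; rw [stokesPot]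
  rw [this]
  refine h5.congr_deriv ?_; symm
  rw [div_pow]
  field_simp


lemma one_le_sqrtπ : (1:ℝ) ≤ Real.sqrt π := by
  rw [show (1:ℝ) = Real.sqrt 1 by simp]
  exact Real.sqrt_le_sqrt (by linarith [Real.pi_gt_three])

lemma coord_le_norm (x : E3) (i : Fin 3) : |x i| ≤ ‖x‖ := by
  rw [← Real.sqrt_sq_eq_abs, EuclideanSpace.norm_eq]
  apply Real.sqrt_le_sqrt
  have := Finset.single_le_sum (f := fun j => ‖x j‖ ^ 2)
    (fun j _ => by positivity) (Finset.mem_univ i)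
  simpa [Real.norm_eq_abs, sq_abs] using this

lemma exp_bound (c r : ℝ) (hc : 0 < c) (hr : 1 ≤ r) :
    Real.exp (-r ^ 2 / c ^ 2) * r ^ 4 ≤ 4 * c ^ 4 := by
  have hr0 : 0 < r := lt_of_lt_of_le one_pos hr
  have h := exp_neg_le (r ^ 2 / c ^ 2) (by positivity)
  have h2 : Real.exp (-r ^ 2 / c ^ 2) ≤ 4 * c ^ 4 / r ^ 4 := by
    rw [neg_div]
    refine h.trans_eq ?_
    field_simp
  calc Real.exp (-r ^ 2 / c ^ 2) * r ^ 4 ≤ (4 * c ^ 4 / r ^ 4) * r ^ 4 := by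
        exact mul_le_mul_of_nonneg_right h2 (by positivity)
    _ = 4 * c ^ 4 := by field_simp

lemma boundP1 (c r : ℝ) (hc : 0 < c) (hr : 1 ≤ r) :
    |P1 c (r ^ 2)| ≤ (4 * c ^ 3 + 1) / r ^ 3 := by
  have hr0 : 0 < r := lt_of_lt_of_le one_pos hr
  have hπ := sqrtπ_pos
  have hπ1 := one_le_sqrtπ
  have hs : Real.sqrt (r ^ 2) = r := Real.sqrt_sq hr0.le
  have hE := exp_bound c r hc hr
  have hEpos := Real.exp_pos (-r ^ 2 / c ^ 2)
  rw [P1, hs]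
  have hA : Real.exp (-r ^ 2 / c ^ 2) / (Real.sqrt π * c * r ^ 2) ≤ 4 * c ^ 3 / r ^ 3 := by
    rw [div_le_div_iff₀ (by positivity) (by positivity)]
    have h1 : Real.exp (-r ^ 2 / c ^ 2) * r ^ 3 ≤ 4 * c ^ 4 := by
      nlinarith [mul_nonneg (mul_nonneg hEpos.le (pow_nonneg hr0.le 3)) (sub_nonneg.mpr hr), hE]
    have h2 : (1:ℝ) ≤ Real.sqrt π * r ^ 2 := by nlinarith
    nlinarith [h1, mul_nonneg (pow_nonneg hc.le 4) (sub_nonneg.mpr h2)]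
  have hB : |erf (r / c) / (2 * r ^ 2 * r)| ≤ 1 / r ^ 3 := by
    rw [abs_div, abs_of_nonneg (by positivity : (0:ℝ) ≤ 2 * r ^ 2 * r)]
    rw [div_le_div_iff₀ (by positivity) (by positivity)]
    have := abs_erf_le (r / c)
    nlinarith [mul_le_mul_of_nonneg_right this (pow_nonneg hr0.le 3)]
  calc |Real.exp (-r ^ 2 / c ^ 2) / (Real.sqrt π * c * r ^ 2) - erf (r / c) / (2 * r ^ 2 * r)|
      ≤ |Real.exp (-r ^ 2 / c ^ 2) / (Real.sqrt π * c * r ^ 2)| + |erf (r / c) / (2 * r ^ 2 * r)| :=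
        abs_sub _ _
    _ ≤ 4 * c ^ 3 / r ^ 3 + 1 / r ^ 3 := by
        refine add_le_add ?_ hB
        rwa [abs_of_nonneg (by positivity)]
    _ = (4 * c ^ 3 + 1) / r ^ 3 := by ring

lemma boundP2 (c r : ℝ) (hc : 0 < c) (hr : 1 ≤ r) :
    |P2 c (r ^ 2)| ≤ (4 * c + 6 * c ^ 3 + 3 / 2) / r ^ 5 := by
  have hr0 : 0 < r := lt_of_lt_of_le one_pos hr
  have hπ := sqrtπ_pos
  have hπ1 := one_le_sqrtπ
  have hs : Real.sqrt (r ^ 2) = r := Real.sqrt_sq hr0.le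
  have hE := exp_bound c r hc hr
  have hEpos := Real.exp_pos (-r ^ 2 / c ^ 2)
  have hr4 : r ≤ r ^ 4 := by nlinarith [mul_le_mul_of_nonneg_left (one_le_pow₀ hr (n := 3)) hr0.le]
  rw [P2, hs, neg_div]
  have hq2 : (r ^ 2) ^ 2 = r ^ 4 := by ring
  rw [hq2]
  set T1 := Real.exp (-r ^ 2 / c ^ 2) / (Real.sqrt π * c ^ 3 * r ^ 2) with hT1
  set T2 := 3 * Real.exp (-r ^ 2 / c ^ 2) / (2 * Real.sqrt π * c * r ^ 4) with hT2
  set T3 := 3 * erf (r / c) / (4 * r ^ 4 * r) with hT3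
  have hB1 : T1 ≤ 4 * c / r ^ 5 := by
    rw [hT1, div_le_div_iff₀ (by positivity) (by positivity)]
    have h1 : Real.exp (-r ^ 2 / c ^ 2) * r ^ 5 ≤ 4 * c ^ 4 * r := by
      nlinarith [mul_le_mul_of_nonneg_right hE hr0.le]
    have h2 : (1:ℝ) ≤ Real.sqrt π * r := by nlinarith
    nlinarith [h1, mul_nonneg (mul_nonneg (by positivity : (0:ℝ) ≤ 4 * c ^ 4) hr0.le)
      (sub_nonneg.mpr h2)]
  have hB2 : T2 ≤ 6 * c ^ 3 / r ^ 5 := by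
    rw [hT2, div_le_div_iff₀ (by positivity) (by positivity)]
    have h1 : 3 * Real.exp (-r ^ 2 / c ^ 2) * r ^ 5 ≤ 12 * c ^ 4 * r := by
      nlinarith [mul_le_mul_of_nonneg_right hE hr0.le]
    have h2 : r ≤ Real.sqrt π * r ^ 4 := by nlinarith
    nlinarith [h1, mul_nonneg (by positivity : (0:ℝ) ≤ 12 * c ^ 4) (sub_nonneg.mpr h2)]
  have hB3 : |T3| ≤ (3 / 2) / r ^ 5 := by
    rw [hT3, abs_div, abs_of_nonneg (by positivity : (0:ℝ) ≤ 4 * r ^ 4 * r),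
      div_le_div_iff₀ (by positivity) (by positivity), abs_mul,
      abs_of_pos (by norm_num : (0:ℝ) < 3)]
    have := abs_erf_le (r / c)
    nlinarith [mul_le_mul_of_nonneg_right this (pow_nonneg hr0.le 5)]
  have hT1n : (0:ℝ) ≤ T1 := by rw [hT1]; positivity
  have hT2n : (0:ℝ) ≤ T2 := by rw [hT2]; positivity
  calc |-T1 - T2 + T3| ≤ |-T1 - T2| + |T3| := abs_add_le _ _
    _ ≤ (|-T1| + |T2|) + |T3| := add_le_add_left (abs_sub _ _) _
    _ = (T1 + T2) + |T3| := by rw [abs_neg, abs_of_nonneg hT1n, abs_of_nonneg hT2n]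
    _ ≤ (4 * c / r ^ 5 + 6 * c ^ 3 / r ^ 5) + (3 / 2) / r ^ 5 :=
        add_le_add (add_le_add hB1 hB2) hB3
    _ = (4 * c + 6 * c ^ 3 + 3 / 2) / r ^ 5 := by ring


/-- The time-dependent Stokeslet velocity decays like a Stokeslet in the far field:
for fixed `t > 0` there exists `C > 0` with `|u^S_{ki}(x,t)| ≤ C ‖x‖⁻³` for `‖x‖ ≥ 1`. -/
theorem stokeslet_far_field_decay (ν : ℝ) (hν : 0 < ν) (t : ℝ) (ht : 0 < t) (i k : Fin 3) :
    ∃ C : ℝ, 0 < C ∧ ∀ x : E3, 1 ≤ ‖x‖ →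
      |stokeslet ν k i x t| ≤ C * ‖x‖ ^ (-(3 : ℝ)) := by
  have h4 : 0 < 4 * ν * t := by positivity
  set c := Real.sqrt (4 * ν * t) with hcdef
  have hc : 0 < c := Real.sqrt_pos.mpr h4
  have hπ := sqrtπ_pos
  have hπ1 := one_le_sqrtπ
  have hπ0 := Real.pi_pos
  set K1 : ℝ := 4 * c ^ 3 + 1 with hK1
  set K2 : ℝ := 4 * c + 6 * c ^ 3 + 3 / 2 with hK2
  have hK1pos : (0:ℝ) < K1 := by rw [hK1]; positivity
  have hK2pos : (0:ℝ) < K2 := by rw [hK2]; positivity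
  refine ⟨1 / (4 * π * ν) * (16 * ν * c) + 1 / (4 * π) * (4 * K2 + 2 * K1),
    by positivity, ?_⟩
  intro x hrx
  have hr0 : 0 < ‖x‖ := lt_of_lt_of_le one_pos hrx
  have hx : x ≠ 0 := norm_pos_iff.mp hr0
  set r := ‖x‖ with hrdef
  have hE := exp_bound c r hc hrx
  have hEpos := Real.exp_pos (-r ^ 2 / c ^ 2)
  -- time derivative bound
  have hD := (deriv_stokesPot_time ν t hν ht x hx).deriv
  rw [← hcdef, ← hrdef] at hD
  have hDb : |deriv (fun s => stokesPot ν x s) t| ≤ 16 * ν * c / r ^ 3 := by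
    rw [hD, abs_div, abs_of_nonneg (by positivity : (0:ℝ) ≤ Real.sqrt π * c ^ 3),
      abs_mul, abs_of_nonpos (by norm_num [hν.le] : -(4 * ν) ≤ (0:ℝ)),
      abs_of_pos hEpos]
    rw [div_le_div_iff₀ (by positivity) (by positivity)]
    have h1 : Real.exp (-r ^ 2 / c ^ 2) * r ^ 3 ≤ 4 * c ^ 4 := by
      nlinarith [mul_nonneg (mul_nonneg hEpos.le (pow_nonneg hr0.le 3)) (sub_nonneg.mpr hrx), hE]
    have h2 : (1:ℝ) ≤ Real.sqrt π := hπ1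
    nlinarith [mul_le_mul_of_nonneg_left h1 (by positivity : (0:ℝ) ≤ 4 * ν),
      mul_nonneg (by positivity : (0:ℝ) ≤ 16 * ν * c ^ 4) (sub_nonneg.mpr h2)]
  -- spatial bound
  have hS := pd_pd_stokesPot ν t hc i k x hx
  rw [← hcdef, ← hrdef] at hS
  have hP1 := boundP1 c r hc hrx
  have hP2 := boundP2 c r hc hrx
  have hxi := coord_le_norm x i
  have hxk := coord_le_norm x k
  rw [← hrdef] at hxi hxk
  have hSb : |pd k (fun y => pd i (fun z => stokesPot ν z t) y) x|
      ≤ (4 * K2 + 2 * K1) / r ^ 3 := by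
    rw [hS]
    have hA : |4 * P2 c (r ^ 2) * x i * x k| ≤ 4 * K2 / r ^ 3 := by
      calc |4 * P2 c (r ^ 2) * x i * x k|
          = 4 * |P2 c (r ^ 2)| * |x i| * |x k| := by
            rw [abs_mul, abs_mul, abs_mul, abs_of_pos (by norm_num : (0:ℝ) < 4)]
        _ ≤ 4 * (K2 / r ^ 5) * r * r := by
            refine mul_le_mul (mul_le_mul ?_ hxi (abs_nonneg _) (by positivity)) hxk
              (abs_nonneg _) (by positivity)
            exact mul_le_mul_of_nonneg_left hP2 (by norm_num)
        _ = 4 * K2 / r ^ 3 := by field_simp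
    have hB : |2 * P1 c (r ^ 2) * (if k = i then (1:ℝ) else 0)| ≤ 2 * K1 / r ^ 3 := by
      have hδ : |(if k = i then (1:ℝ) else 0)| ≤ 1 := by split_ifs <;> norm_num
      calc |2 * P1 c (r ^ 2) * (if k = i then (1:ℝ) else 0)|
          = 2 * |P1 c (r ^ 2)| * |(if k = i then (1:ℝ) else 0)| := by
            rw [abs_mul, abs_mul, abs_of_pos (by norm_num : (0:ℝ) < 2)]
        _ ≤ 2 * (K1 / r ^ 3) * 1 :=
            mul_le_mul (mul_le_mul_of_nonneg_left hP1 (by norm_num)) hδ (abs_nonneg _)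
              (by positivity)
        _ = 2 * K1 / r ^ 3 := by ring
    calc |4 * P2 c (r ^ 2) * x i * x k + 2 * P1 c (r ^ 2) * (if k = i then (1:ℝ) else 0)|
        ≤ |4 * P2 c (r ^ 2) * x i * x k| + |2 * P1 c (r ^ 2) * (if k = i then (1:ℝ) else 0)| :=
          abs_add_le _ _
      _ ≤ 4 * K2 / r ^ 3 + 2 * K1 / r ^ 3 := add_le_add hA hB
      _ = (4 * K2 + 2 * K1) / r ^ 3 := by ring
  -- assemble
  have hrpow : ‖x‖ ^ (-(3 : ℝ)) = (r ^ 3)⁻¹ := by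
    rw [← hrdef, Real.rpow_neg hr0.le, show ((3:ℝ)) = ((3:ℕ):ℝ) by norm_num,
      Real.rpow_natCast]
  rw [stokeslet, hrpow]
  have hδ : |(if k = i then (1:ℝ) else 0)| ≤ 1 := by split_ifs <;> norm_num
  have ha : (0:ℝ) < 1 / (4 * π * ν) := by positivity
  have hb : (0:ℝ) < 1 / (4 * π) := by positivity
  calc |1 / (4 * π * ν) * deriv (fun s => stokesPot ν x s) t * (if k = i then (1:ℝ) else 0)
        - 1 / (4 * π) * pd k (fun y => pd i (fun z => stokesPot ν z t) y) x|
      ≤ |1 / (4 * π * ν) * deriv (fun s => stokesPot ν x s) t * (if k = i then (1:ℝ) else 0)|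
        + |1 / (4 * π) * pd k (fun y => pd i (fun z => stokesPot ν z t) y) x| := abs_sub _ _
    _ = 1 / (4 * π * ν) * |deriv (fun s => stokesPot ν x s) t| * |(if k = i then (1:ℝ) else 0)|
        + 1 / (4 * π) * |pd k (fun y => pd i (fun z => stokesPot ν z t) y) x| := by
          rw [abs_mul, abs_mul, abs_mul, abs_of_pos ha, abs_of_pos hb]
    _ ≤ 1 / (4 * π * ν) * (16 * ν * c / r ^ 3) * 1
        + 1 / (4 * π) * ((4 * K2 + 2 * K1) / r ^ 3) := by
          refine add_le_add ?_ (mul_le_mul_of_nonneg_left hSb hb.le)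
          exact mul_le_mul (mul_le_mul_of_nonneg_left hDb ha.le) hδ (abs_nonneg _)
            (by positivity)
    _ = (1 / (4 * π * ν) * (16 * ν * c) + 1 / (4 * π) * (4 * K2 + 2 * K1)) * (r ^ 3)⁻¹ := by
          field_simp

end
end
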